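/- Let g, h : ℝ^m → ℝ be strongly convex with modulus ρ > 0, with g continuously differentiable, φ := g − h, and inf φ > −∞. Let {x_k}, {y_k}, {λ_k} be a BDCA sequence (with parameter α > 0) converging to a limit point x*. Assume ∇g is Lipschitz continuous on a neighborhood of x*, and that φ satisfies the strong Kurdyka–Łojasiewicz inequality at x* with desingularizing function ψ(t) = M t^{1−θ} for some M > 0 and θ ∈ (1/2, 1); that is, there exist η > 0 and a neighborhood U of x* such that M(1−θ)(φ(x) − φ(x*))^{−θ} · dist(0, ∇g(x) − ∂h(x)) ≥ 1 for all x ∈ U with φ(x*) < φ(x) < φ(x*) + η. Then there exists a positive constant η₀ such that ‖x_k − x*‖ ≤ η₀ · k^{−(1−θ)/(2θ−1)} for all sufficiently large k. -/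

import Mathlib

open scoped RealInnerProductSpace
open Filter Topology

/-- The convex subdifferential of `f` at `x`. -/
def subdiff {m : ℕ} (f : EuclideanSpace ℝ (Fin m) → ℝ) (x : EuclideanSpace ℝ (Fin m)) :
    Set (EuclideanSpace ℝ (Fin m)) :=
  {u | ∀ z, f x + ⟪u, z - x⟫ ≤ f z}

lemma grad_mem_subdiff {m : ℕ} (f : EuclideanSpace ℝ (Fin m) → ℝ)
    (hf1 : ContDiff ℝ 1 f) (hconv : ConvexOn ℝ Set.univ f) (x : EuclideanSpace ℝ (Fin m)) :
    gradient f x ∈ subdiff f x := by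
  intro z
  set e := z - x with he
  have hgrad : HasGradientAt f (gradient f x) x :=
    ((hf1.differentiable one_ne_zero) x).hasGradientAt
  have hF : HasFDerivAt f (InnerProductSpace.toDual ℝ _ (gradient f x)) x := hgrad
  have hcurve : HasDerivAt (fun t : ℝ => x + t • e) e 0 := by
    simpa using ((hasDerivAt_id (0:ℝ)).smul_const e).const_add x
  have hq : HasDerivAt (fun t : ℝ => f (x + t • e)) ⟪gradient f x, e⟫ 0 := by
    have hF0 : HasFDerivAt f (InnerProductSpace.toDual ℝ _ (gradient f x))
        ((fun t : ℝ => x + t • e) 0) := by simpa using hF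
    have := hF0.comp_hasDerivAt 0 hcurve
    simpa [InnerProductSpace.toDual_apply_apply, Function.comp_def] using this
  have hqc : ConvexOn ℝ Set.univ (fun t : ℝ => f (x + t • e)) := by
    have := hconv.comp_affineMap
      (AffineMap.lineMap x z : ℝ →ᵃ[ℝ] EuclideanSpace ℝ (Fin m))
    simp only [Set.preimage_univ] at this
    have heq : (fun t : ℝ => f (x + t • e)) = f ∘ (AffineMap.lineMap x z) := by
      funext t
      simp [Function.comp, AffineMap.lineMap_apply, he, add_comm]
    rw [heq]; exact this
  have hs := hqc.le_slope_of_hasDerivAt (Set.mem_univ (0:ℝ)) (Set.mem_univ (1:ℝ))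
    one_pos hq
  rw [slope_def_field] at hs
  simp only [zero_smul, add_zero, one_smul] at hs
  have h1 : x + e = z := by simp [he]
  rw [h1] at hs
  simp only [sub_zero, div_one] at hs
  linarith

lemma strong_subgrad {m : ℕ} {ρ : ℝ} (hρ : 0 < ρ) (f : EuclideanSpace ℝ (Fin m) → ℝ)
    (hf : ConvexOn ℝ Set.univ fun z => f z - ρ / 2 * ‖z‖ ^ 2)
    {x u : EuclideanSpace ℝ (Fin m)} (hu : u ∈ subdiff f x) (z : EuclideanSpace ℝ (Fin m)) :
    f x + ⟪u, z - x⟫ + ρ / 2 * ‖z - x‖ ^ 2 ≤ f z := by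
  set e := z - x with he
  set c := ρ / 2 * ‖e‖ ^ 2 with hc
  have hc0 : 0 ≤ c := by positivity
  have key : ∀ t : ℝ, 0 < t → t ≤ 1 → ⟪u, e⟫ ≤ f z - f x - c + t * c := by
    intro t ht0 ht1
    have hsub := hu (x + t • e)
    simp only [add_sub_cancel_left] at hsub
    rw [real_inner_smul_right] at hsub
    have hcvx := hf.2 (Set.mem_univ x) (Set.mem_univ z) (by linarith : (0:ℝ) ≤ 1 - t)
      (le_of_lt ht0) (by ring)
    simp only [smul_eq_mul] at hcvx
    have hpt : (1 - t) • x + t • z = x + t • e := by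
      rw [he]; module
    rw [hpt] at hcvx
    have hxe : ‖x + t • e‖ ^ 2 = ‖x‖ ^ 2 + 2 * t * ⟪x, e⟫ + t ^ 2 * ‖e‖ ^ 2 := by
      rw [norm_add_sq_real, real_inner_smul_right, norm_smul]
      simp [mul_pow, abs_of_pos ht0]
      ring
    have hz2 : ‖z‖ ^ 2 = ‖x‖ ^ 2 + 2 * ⟪x, e⟫ + ‖e‖ ^ 2 := by
      have : z = x + e := by rw [he]; abel
      rw [this, norm_add_sq_real]
    rw [hxe, hz2] at hcvx
    have h2 : f x + t * ⟪u, e⟫ ≤ f (x + t • e) := hsub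
    nlinarith [hcvx, h2, sq_nonneg (‖e‖), mul_pos ht0 ht0]
  have hfin : ⟪u, e⟫ ≤ f z - f x - c := by
    by_contra hlt
    push_neg at hlt
    set ε := ⟪u, e⟫ - (f z - f x - c) with hε
    have hε0 : 0 < ε := by linarith
    by_cases hcz : c = 0
    · have := key 1 one_pos le_rfl
      rw [hcz] at this; linarith
    · have hcpos : 0 < c := lt_of_le_of_ne hc0 (Ne.symm hcz)
      have ht0 : 0 < min 1 (ε / (2 * c)) := by positivity
      have := key _ ht0 (min_le_left _ _)
      have h3 : min 1 (ε / (2 * c)) * c ≤ ε / 2 := by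
        calc min 1 (ε / (2 * c)) * c ≤ (ε / (2 * c)) * c := by
              apply mul_le_mul_of_nonneg_right (min_le_right _ _) (le_of_lt hcpos)
        _ = ε / 2 := by field_simp
      linarith
  linarith

lemma bernoulli_rpow_lower {s t : ℝ} (hs : 0 < s) (ht : 0 < t) (ht1 : t ≤ 1) :
    1 + s * (1 - t) ≤ t ^ (-s) := by
  rw [Real.rpow_def_of_pos ht]
  have h1 : Real.log t ≤ t - 1 := Real.log_le_sub_one_of_pos ht
  have h2 : Real.log t * (-s) + 1 ≤ Real.exp (Real.log t * (-s)) := Real.add_one_le_exp _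
  nlinarith

lemma concave_rpow_upper {r a b : ℝ} (hr : 0 < r) (hr1 : r ≤ 1) (hb : 0 < b) (hba : b ≤ a) :
    r * a ^ (r - 1) * (a - b) ≤ a ^ r - b ^ r := by
  have ha : 0 < a := lt_of_lt_of_le hb hba
  have hgm := Real.geom_mean_le_arith_mean2_weighted hr.le (by linarith : (0:ℝ) ≤ 1 - r)
    (by positivity : (0:ℝ) ≤ b / a) zero_le_one (by ring)
  rw [Real.one_rpow, mul_one, Real.div_rpow hb.le ha.le] at hgm
  have hA : 0 < a ^ r := Real.rpow_pos_of_pos ha r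
  have key : b ^ r ≤ (r * (b / a) + (1 - r)) * a ^ r := by
    rw [← div_le_iff₀ hA] at *; linarith
  rw [Real.rpow_sub_one (ne_of_gt ha)]
  have haa : a * a⁻¹ = 1 := mul_inv_cancel₀ (ne_of_gt ha)
  have hbd : b / a = b * a⁻¹ := div_eq_mul_inv b a
  rw [hbd] at key
  have hainv : 0 < a⁻¹ := by positivity
  rw [div_eq_mul_inv (a ^ r) a]
  have h4 : r * (a ^ r * a⁻¹) * (a - b) = r * a ^ r - r * (b * a⁻¹) * a ^ r := by
    linear_combination (r * a ^ r) * haa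
  nlinarith [key, h4]

lemma rate_step {y x s c : ℝ} (hs : 0 < s) (hc : 0 < c) (hx : 0 < x) (hxy : x ≤ y)
    (hrec : c * y ^ (s + 1) ≤ y - x) :
    y ^ (-s) + s * c ≤ x ^ (-s) := by
  have hy : 0 < y := lt_of_lt_of_le hx hxy
  have hA : 0 < y ^ (-s) := Real.rpow_pos_of_pos hy _
  have ht : 0 < x / y := by positivity
  have ht1 : x / y ≤ 1 := by rw [div_le_one hy]; exact hxy
  have hb := bernoulli_rpow_lower hs ht ht1
  have hxs : x ^ (-s) = y ^ (-s) * (x / y) ^ (-s) := by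
    rw [← Real.mul_rpow hy.le (by positivity)]
    congr 1
    field_simp
  have hAy : y ^ (-s) * y ^ (s + 1) = y := by
    rw [← Real.rpow_add hy]; norm_num
  have h5 : c * y ≤ y ^ (-s) * (y - x) := by
    calc c * y = y ^ (-s) * (c * y ^ (s + 1)) := by linear_combination c * hAy.symm
    _ ≤ y ^ (-s) * (y - x) := mul_le_mul_of_nonneg_left hrec hA.le
  have h6 : c ≤ y ^ (-s) * (1 - x / y) := by
    have : y ^ (-s) * (1 - x / y) = y ^ (-s) * (y - x) / y := by field_simp
    rw [this, le_div_iff₀ hy]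
    linarith
  calc y ^ (-s) + s * c ≤ y ^ (-s) + s * (y ^ (-s) * (1 - x / y)) := by nlinarith
  _ = y ^ (-s) * (1 + s * (1 - x / y)) := by ring
  _ ≤ y ^ (-s) * (x / y) ^ (-s) := mul_le_mul_of_nonneg_left hb hA.le
  _ = x ^ (-s) := hxs.symm

lemma rate_rec {Δ : ℕ → ℝ} {s c : ℝ} (hs : 0 < s) (hc : 0 < c) {N : ℕ}
    (hpos : ∀ k, N ≤ k → 0 < Δ k) (hmono : ∀ k, N ≤ k → Δ (k + 1) ≤ Δ k)
    (hrec : ∀ k, N ≤ k → c * Δ k ^ (s + 1) ≤ Δ k - Δ (k + 1)) :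
    ∀ k, N ≤ k → Δ N ^ (-s) + s * c * ((k : ℝ) - N) ≤ Δ k ^ (-s) := by
  have step : ∀ n : ℕ, Δ N ^ (-s) + s * c * n ≤ Δ (N + n) ^ (-s) := by
    intro n
    induction n with
    | zero => simp
    | succ n ih =>
      have hk : N ≤ N + n := Nat.le_add_right _ _
      have := rate_step hs hc (hpos (N + n + 1) (by omega)) (hmono (N + n) hk)
        (hrec (N + n) hk)
      push_cast
      have : Δ (N + n) ^ (-s) + s * c ≤ Δ (N + (n + 1)) ^ (-s) := by
        rw [show N + (n + 1) = N + n + 1 by omega]; exact this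
      push_cast at ih ⊢
      linarith
  intro k hk
  have := step (k - N)
  rw [show N + (k - N) = k by omega] at this
  have hcast : ((k - N : ℕ) : ℝ) = (k : ℝ) - N := by
    have := Nat.cast_sub hk (R := ℝ); linarith [this]
  rw [hcast] at this
  exact this

lemma tail_bound {E : Type*} [NormedAddCommGroup E] (x : ℕ → E) (F : ℕ → ℝ) (C : ℝ)
    (hC : 0 ≤ C) (k : ℕ) (hstep : ∀ j, k ≤ j → ‖x (j + 1) - x j‖ ≤ C * (F j - F (j + 1))) :
    ∀ n, k ≤ n → ‖x k - x (n + 1)‖ ≤ C * (F k - F (n + 1)) := by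
  intro n hn
  induction n with
  | zero =>
    have hk0 : k = 0 := Nat.le_zero.mp hn
    subst hk0
    rw [norm_sub_rev]
    exact hstep 0 le_rfl
  | succ n ih =>
    rcases Nat.lt_or_ge n k with hlt | hge
    · have hkeq : k = n + 1 := by omega
      subst hkeq
      rw [norm_sub_rev]
      exact hstep (n + 1) le_rfl
    · have h1 := ih hge
      have h2 : ‖x (n + 1) - x (n + 1 + 1)‖ ≤ C * (F (n + 1) - F (n + 1 + 1)) := by
        rw [norm_sub_rev]
        exact hstep (n + 1) (by omega)
      have h3 : ‖x k - x (n + 1 + 1)‖ ≤ ‖x k - x (n + 1)‖ + ‖x (n + 1) - x (n + 1 + 1)‖ :=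
        norm_sub_le_norm_sub_add_norm_sub _ _ _
      linarith

set_option maxHeartbeats 4000000 in
theorem stmt17 {m : ℕ} (g h : EuclideanSpace ℝ (Fin m) → ℝ) (ρ : ℝ) (hρ : 0 < ρ)
    (hg : ConvexOn ℝ Set.univ fun z => g z - ρ / 2 * ‖z‖ ^ 2)
    (hh : ConvexOn ℝ Set.univ fun z => h z - ρ / 2 * ‖z‖ ^ 2)
    (hg1 : ContDiff ℝ 1 g)
    (φ : EuclideanSpace ℝ (Fin m) → ℝ) (hφ : φ = fun z => g z - h z)
    (hbdd : BddBelow (Set.range φ))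
    (α : ℝ) (hα : 0 < α)
    (x y : ℕ → EuclideanSpace ℝ (Fin m)) (lam : ℕ → ℝ)
    (hlam : ∀ k, 0 ≤ lam k)
    (hsub : ∀ k, gradient g (y k) ∈ subdiff h (x k))
    (hdesc : ∀ k, φ (y k + lam k • (y k - x k)) ≤ φ (y k) - α * lam k ^ 2 * ‖y k - x k‖ ^ 2)
    (hnext : ∀ k, x (k + 1) = y k + lam k • (y k - x k))
    (xs : EuclideanSpace ℝ (Fin m))
    (hconv : Tendsto x atTop (𝓝 xs))
    -- ∇g is Lipschitz continuous on a neighborhood of x*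
    (hLip : ∃ L : NNReal, ∃ U ∈ 𝓝 xs, LipschitzOnWith L (fun z => gradient g z) U)
    (M θ : ℝ) (hM : 0 < M) (hθ : θ ∈ Set.Ioo (1 / 2 : ℝ) 1)
    -- strong Kurdyka–Łojasiewicz inequality at x* with ψ(t) = M t^(1-θ)
    (hKL : ∃ η > (0 : ℝ), ∃ U ∈ 𝓝 xs,
      ∀ z ∈ U, φ xs < φ z → φ z < φ xs + η →
        1 ≤ M * (1 - θ) * (φ z - φ xs) ^ (-θ) *
          Metric.infDist 0 ((fun u => gradient g z - u) '' subdiff h z)) :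
    ∃ η₀ > (0 : ℝ), ∃ N : ℕ, ∀ k, N ≤ k →
      ‖x k - xs‖ ≤ η₀ * (k : ℝ) ^ (-((1 - θ) / (2 * θ - 1))) := by
  obtain ⟨hθ1, hθ2⟩ := hθ
  -- convexity of g
  have hsqconv : ConvexOn ℝ Set.univ (fun z : EuclideanSpace ℝ (Fin m) => ρ / 2 * ‖z‖ ^ 2) := by
    have hstrong : StrongConvexOn Set.univ ρ
        (fun z : EuclideanSpace ℝ (Fin m) => ρ / 2 * ‖z‖ ^ 2) := by
      rw [strongConvexOn_iff_convex]
      simpa using convexOn_const (0 : ℝ) convex_univ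
    exact (hstrong.strictConvexOn hρ).convexOn
  have hgconv : ConvexOn ℝ Set.univ g := by
    have h2 := hg.add hsqconv
    have heq : ((fun z : EuclideanSpace ℝ (Fin m) => g z - ρ / 2 * ‖z‖ ^ 2)
        + fun z => ρ / 2 * ‖z‖ ^ 2) = g := by funext z; simp
    rwa [heq] at h2
  -- basic decrease
  have hdec : ∀ k, φ (y k) ≤ φ (x k) - ρ * ‖y k - x k‖ ^ 2 := by
    intro k
    have hgs := strong_subgrad hρ g hg (grad_mem_subdiff g hg1 hgconv (y k)) (x k)
    have hhs := strong_subgrad hρ h hh (hsub k) (y k)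
    have hinner : ⟪gradient g (y k), x k - y k⟫ = -⟪gradient g (y k), y k - x k⟫ := by
      rw [← inner_neg_right]; congr 1; abel
    have hnorm : ‖x k - y k‖ = ‖y k - x k‖ := norm_sub_rev _ _
    rw [hφ]
    simp only
    rw [hinner, hnorm] at hgs
    linarith
  have hdec2 : ∀ k, φ (x (k + 1)) ≤ φ (x k) - ρ * ‖y k - x k‖ ^ 2
      - α * lam k ^ 2 * ‖y k - x k‖ ^ 2 := by
    intro k
    have := hdesc k
    rw [← hnext k] at this
    linarith [hdec k]
  have hmonoφ : ∀ k, φ (x (k + 1)) ≤ φ (x k) := by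
    intro k
    have := hdec2 k
    nlinarith [sq_nonneg (‖y k - x k‖), sq_nonneg (lam k), sq_nonneg (lam k * ‖y k - x k‖)]
  have hanti : Antitone (fun k => φ (x k)) := antitone_nat_of_succ_le hmonoφ
  -- continuity of φ
  have hcont : Continuous φ := by
    have hhc : Continuous h := by
      have h1 : ContinuousOn (fun z : EuclideanSpace ℝ (Fin m) => h z - ρ / 2 * ‖z‖ ^ 2)
          Set.univ := hh.continuousOn isOpen_univ
      have h2 : Continuous (fun z : EuclideanSpace ℝ (Fin m) => h z - ρ / 2 * ‖z‖ ^ 2) :=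
        continuousOn_univ.mp h1
      have h3 : Continuous (fun z : EuclideanSpace ℝ (Fin m) =>
          (h z - ρ / 2 * ‖z‖ ^ 2) + ρ / 2 * ‖z‖ ^ 2) := by
        apply h2.add
        continuity
      simpa using h3
    rw [hφ]
    exact hg1.continuous.sub hhc
  have hφtend : Tendsto (fun k => φ (x k)) atTop (𝓝 (φ xs)) :=
    (hcont.continuousAt.tendsto).comp hconv
  -- nonnegativity of Δ
  have hΔnn : ∀ k, φ xs ≤ φ (x k) := by
    intro k
    apply le_of_tendsto hφtend
    filter_upwards [eventually_ge_atTop k] with n hn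
    exact hanti hn
  -- Δ k → 0
  have hΔtend : Tendsto (fun k => φ (x k) - φ xs) atTop (𝓝 0) := by
    have := hφtend.sub (tendsto_const_nhds (x := φ xs))
    simpa using this
  -- d k → 0
  have hdiff_tend : Tendsto (fun k => φ (x k) - φ (x (k + 1))) atTop (𝓝 0) := by
    have h1 : Tendsto (fun k => φ (x (k + 1))) atTop (𝓝 (φ xs)) :=
      hφtend.comp (tendsto_add_atTop_nat 1)
    have := hφtend.sub h1
    simpa using this
  have hdsq_tend : Tendsto (fun k => ‖y k - x k‖ ^ 2) atTop (𝓝 0) := by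
    apply tendsto_of_tendsto_of_tendsto_of_le_of_le tendsto_const_nhds
      (by simpa using hdiff_tend.const_mul (1 / ρ))
    · intro k; positivity
    · intro k
      have := hdec2 k
      have h2 : ρ * ‖y k - x k‖ ^ 2 ≤ φ (x k) - φ (x (k + 1)) := by
        nlinarith [sq_nonneg (lam k * ‖y k - x k‖)]
      simp only
      calc ‖y k - x k‖ ^ 2 = ρ⁻¹ * (ρ * ‖y k - x k‖ ^ 2) := by field_simp
      _ ≤ ρ⁻¹ * (φ (x k) - φ (x (k + 1))) := mul_le_mul_of_nonneg_left h2 (by positivity)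
  have hd_tend : Tendsto (fun k => y k - x k) atTop (𝓝 0) := by
    rw [tendsto_zero_iff_norm_tendsto_zero]
    have hsq : Tendsto (fun k => Real.sqrt (‖y k - x k‖ ^ 2)) atTop (𝓝 (Real.sqrt 0)) :=
      (Real.continuous_sqrt.continuousAt.tendsto).comp hdsq_tend
    simpa [Real.sqrt_sq (norm_nonneg _)] using hsq
  have hy_tend : Tendsto y atTop (𝓝 xs) := by
    have := hconv.add hd_tend
    simpa using this
  -- step norm
  have hstep_eq : ∀ k, ‖x (k + 1) - x k‖ = (1 + lam k) * ‖y k - x k‖ := by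
    intro k
    have : x (k + 1) - x k = (1 + lam k) • (y k - x k) := by
      rw [hnext k]; module
    rw [this, norm_smul, Real.norm_eq_abs, abs_of_pos (by linarith [hlam k] : 0 < 1 + lam k)]
  -- β–inequality
  set β : ℝ := min ρ α / 2 with hβdef
  have hβ : 0 < β := by
    have := lt_min hρ hα
    positivity
  have hβstep : ∀ k, β * ‖x (k + 1) - x k‖ ^ 2 ≤ φ (x k) - φ (x (k + 1)) := by
    intro k
    rw [hstep_eq k]
    have h1 := hdec2 k
    have hmin1 : β * 2 ≤ ρ := by rw [hβdef]; have := min_le_left ρ α; linarith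
    have hmin2 : β * 2 ≤ α := by rw [hβdef]; have := min_le_right ρ α; linarith
    nlinarith [sq_nonneg ((1 - lam k) * ‖y k - x k‖), sq_nonneg (‖y k - x k‖),
      sq_nonneg (lam k * ‖y k - x k‖), hlam k]
  by_cases hcase : ∀ k, φ xs < φ (x k)
  · obtain ⟨L, U₁, hU₁, hLip'⟩ := hLip
    obtain ⟨η, hη, U₂, hU₂, hKL'⟩ := hKL
    set L₀ : ℝ := (L : ℝ) + 1 with hL₀def
    have hL₀ : 0 < L₀ := by positivity
    set s : ℝ := 2 * θ - 1 with hsdef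
    set r : ℝ := 1 - θ with hrdef
    have hs : 0 < s := by rw [hsdef]; linarith
    have hr : 0 < r := by rw [hrdef]; linarith
    have hr1 : r ≤ 1 := by rw [hrdef]; linarith
    have hθ0 : 0 < θ := by linarith
    set κ : ℝ := M * (1 - θ) with hκdef
    have hκ : 0 < κ := by rw [hκdef]; nlinarith
    have hΔpos : ∀ k, 0 < φ (x k) - φ xs := fun k => sub_pos.mpr (hcase k)
    -- eventuality
    have E1 : ∀ᶠ k in atTop, x k ∈ U₁ := hconv.eventually_mem hU₁
    have E2 : ∀ᶠ k in atTop, y k ∈ U₁ := hy_tend.eventually_mem hU₁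
    have E3 : ∀ᶠ k in atTop, x k ∈ U₂ := hconv.eventually_mem hU₂
    have E4 : ∀ᶠ k in atTop, φ (x k) - φ xs < η := by
      have : ∀ᶠ z in 𝓝 (0:ℝ), z < η := Filter.Tendsto.eventually_lt_const hη tendsto_id
      exact hΔtend.eventually this
    obtain ⟨N, hN⟩ := eventually_atTop.mp (E1.and (E2.and (E3.and E4)))
    -- KL gives a lower bound on the step
    have hKLd : ∀ k, N ≤ k →
        (φ (x k) - φ xs) ^ θ / (κ * L₀) ≤ ‖y k - x k‖ := by
      intro k hk
      obtain ⟨hx1, hy1, hx2, hΔη⟩ := hN k hk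
      have hΔk := hΔpos k
      have hkl := hKL' (x k) hx2 (hcase k) (by linarith)
      have hel : gradient g (x k) - gradient g (y k) ∈
          (fun u => gradient g (x k) - u) '' subdiff h (x k) :=
        Set.mem_image_of_mem _ (hsub k)
      have hinf : Metric.infDist 0 ((fun u => gradient g (x k) - u) '' subdiff h (x k))
          ≤ L₀ * ‖y k - x k‖ := by
        have h1 : Metric.infDist 0 ((fun u => gradient g (x k) - u) '' subdiff h (x k)) ≤
            dist 0 (gradient g (x k) - gradient g (y k)) :=
          Metric.infDist_le_dist_of_mem hel
        rw [dist_zero_left] at h1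
        have h3 : dist (gradient g (x k)) (gradient g (y k)) ≤ (L : ℝ) * dist (x k) (y k) :=
          hLip'.dist_le_mul (x k) hx1 (y k) hy1
        rw [dist_eq_norm, dist_eq_norm] at h3
        have h4 : ‖x k - y k‖ = ‖y k - x k‖ := norm_sub_rev _ _
        rw [h4] at h3
        have h5 : (L : ℝ) * ‖y k - x k‖ ≤ L₀ * ‖y k - x k‖ := by
          apply mul_le_mul_of_nonneg_right _ (norm_nonneg _)
          rw [hL₀def]; linarith
        linarith
      have hpow : 0 < (φ (x k) - φ xs) ^ (-θ) := Real.rpow_pos_of_pos hΔk _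
      have h6 : (1:ℝ) ≤ κ * (φ (x k) - φ xs) ^ (-θ) * (L₀ * ‖y k - x k‖) := by
        have := mul_le_mul_of_nonneg_left hinf (by positivity : (0:ℝ) ≤ κ * (φ (x k) - φ xs) ^ (-θ))
        calc (1:ℝ) ≤ M * (1 - θ) * (φ (x k) - φ xs) ^ (-θ) *
              Metric.infDist 0 ((fun u => gradient g (x k) - u) '' subdiff h (x k)) := hkl
        _ = κ * (φ (x k) - φ xs) ^ (-θ) *
              Metric.infDist 0 ((fun u => gradient g (x k) - u) '' subdiff h (x k)) := by
              rw [hκdef]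
        _ ≤ κ * (φ (x k) - φ xs) ^ (-θ) * (L₀ * ‖y k - x k‖) := this
      have hprodθ : (φ (x k) - φ xs) ^ θ * (φ (x k) - φ xs) ^ (-θ) = 1 := by
        rw [← Real.rpow_add hΔk]; simp
      rw [div_le_iff₀ (by positivity : (0:ℝ) < κ * L₀)]
      calc (φ (x k) - φ xs) ^ θ
          = (φ (x k) - φ xs) ^ θ * 1 := by ring
      _ ≤ (φ (x k) - φ xs) ^ θ * (κ * (φ (x k) - φ xs) ^ (-θ) * (L₀ * ‖y k - x k‖)) := by
            apply mul_le_mul_of_nonneg_left h6 (by positivity)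
      _ = ((φ (x k) - φ xs) ^ θ * (φ (x k) - φ xs) ^ (-θ)) * (κ * L₀ * ‖y k - x k‖) := by ring
      _ = ‖y k - x k‖ * (κ * L₀) := by rw [hprodθ]; ring
    -- recursion constants
    set c : ℝ := ρ / (κ * L₀) ^ 2 with hcdef
    have hc : 0 < c := by rw [hcdef]; positivity
    have hmono' : ∀ k, N ≤ k →
        (fun k => φ (x k) - φ xs) (k + 1) ≤ (fun k => φ (x k) - φ xs) k := by
      intro k _; simp only; linarith [hmonoφ k]
    have hpos' : ∀ k, N ≤ k → 0 < (fun k => φ (x k) - φ xs) k := fun k _ => hΔpos k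
    have hrec : ∀ k, N ≤ k → c * (fun k => φ (x k) - φ xs) k ^ (s + 1) ≤
        (fun k => φ (x k) - φ xs) k - (fun k => φ (x k) - φ xs) (k + 1) := by
      intro k hk
      simp only
      have hd := hKLd k hk
      have hΔk := hΔpos k
      have h1 : ρ * ‖y k - x k‖ ^ 2 ≤ φ (x k) - φ (x (k + 1)) := by
        have := hdec2 k
        nlinarith [sq_nonneg (lam k * ‖y k - x k‖)]
      have h2 : ((φ (x k) - φ xs) ^ θ / (κ * L₀)) ^ 2 ≤ ‖y k - x k‖ ^ 2 := by
        apply pow_le_pow_left₀ (by positivity) hd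
      have h3 : ((φ (x k) - φ xs) ^ θ) ^ 2 = (φ (x k) - φ xs) ^ (s + 1) := by
        rw [← Real.rpow_natCast ((φ (x k) - φ xs) ^ θ) 2, ← Real.rpow_mul hΔk.le]
        congr 1
        rw [hsdef]; push_cast; ring
      have h4 : c * (φ (x k) - φ xs) ^ (s + 1) = ρ * ((φ (x k) - φ xs) ^ θ / (κ * L₀)) ^ 2 := by
        rw [hcdef, ← h3]; field_simp
      rw [h4]
      have h5 : ρ * ((φ (x k) - φ xs) ^ θ / (κ * L₀)) ^ 2 ≤ ρ * ‖y k - x k‖ ^ 2 :=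
        mul_le_mul_of_nonneg_left h2 hρ.le
      linarith
    have hrate := rate_rec (Δ := fun k => φ (x k) - φ xs) hs hc hpos' hmono' hrec
    -- ψ-descent step
    have hconv0 : ∀ a b : ℝ, (β / L₀) * a ≤ b → a ≤ (L₀ / β) * b := by
      intro a b hab
      have h1 : a = (L₀ / β) * ((β / L₀) * a) := by field_simp
      rw [h1]
      exact mul_le_mul_of_nonneg_left hab (by positivity)
    have hψ : ∀ j, N ≤ j → (β / L₀) * ‖x (j + 1) - x j‖ ≤
        M * (φ (x j) - φ xs) ^ r - M * (φ (x (j + 1)) - φ xs) ^ r := by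
      intro j hj
      have hΔj := hΔpos j
      have hΔj1 := hΔpos (j + 1)
      have hmj : φ (x (j + 1)) - φ xs ≤ φ (x j) - φ xs := by linarith [hmonoφ j]
      by_cases he : ‖x (j + 1) - x j‖ = 0
      · rw [he, mul_zero, sub_nonneg]
        exact mul_le_mul_of_nonneg_left (Real.rpow_le_rpow hΔj1.le hmj hr.le) hM.le
      · have hepos : 0 < ‖x (j + 1) - x j‖ := lt_of_le_of_ne (norm_nonneg _) (Ne.symm he)
        have hcc := concave_rpow_upper hr hr1 hΔj1 hmj
        have hde : ‖y j - x j‖ ≤ ‖x (j + 1) - x j‖ := by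
          rw [hstep_eq j]
          nlinarith [hlam j, norm_nonneg (y j - x j)]
        have hdlb : (φ (x j) - φ xs) ^ θ / (κ * L₀) ≤ ‖x (j + 1) - x j‖ :=
          (hKLd j hj).trans hde
        have hβs := hβstep j
        set A : ℝ := κ * (φ (x j) - φ xs) ^ (-θ) with hAdef
        have hA : 0 < A := by rw [hAdef]; positivity
        have hprodθ : (φ (x j) - φ xs) ^ θ * (φ (x j) - φ xs) ^ (-θ) = 1 := by
          rw [← Real.rpow_add hΔj]; simp
        have h1le : 1 ≤ A * (L₀ * ‖x (j + 1) - x j‖) := by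
          rw [div_le_iff₀ (by positivity : (0:ℝ) < κ * L₀)] at hdlb
          calc (1:ℝ) = (φ (x j) - φ xs) ^ θ * (φ (x j) - φ xs) ^ (-θ) := hprodθ.symm
          _ ≤ (‖x (j + 1) - x j‖ * (κ * L₀)) * (φ (x j) - φ xs) ^ (-θ) := by
                apply mul_le_mul_of_nonneg_right hdlb (by positivity)
          _ = A * (L₀ * ‖x (j + 1) - x j‖) := by rw [hAdef]; ring
        have hkey : (β / L₀) * ‖x (j + 1) - x j‖ ≤ A * (φ (x j) - φ xs - (φ (x (j + 1)) - φ xs)) := by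
          have step1 : A * (β * ‖x (j + 1) - x j‖ ^ 2) ≤
              A * (φ (x j) - φ xs - (φ (x (j + 1)) - φ xs)) := by
            apply mul_le_mul_of_nonneg_left _ hA.le
            linarith
          have step2 : (β / L₀) * ‖x (j + 1) - x j‖ ≤ A * (β * ‖x (j + 1) - x j‖ ^ 2) := by
            rw [div_mul_eq_mul_div, div_le_iff₀ hL₀]
            calc β * ‖x (j + 1) - x j‖
                = (β * ‖x (j + 1) - x j‖) * 1 := by ring
            _ ≤ (β * ‖x (j + 1) - x j‖) * (A * (L₀ * ‖x (j + 1) - x j‖)) := by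
                  apply mul_le_mul_of_nonneg_left h1le (by positivity)
            _ = A * (β * ‖x (j + 1) - x j‖ ^ 2) * L₀ := by ring
          linarith
        have hrθ : r - 1 = -θ := by rw [hrdef]; ring
        have hfin : A * (φ (x j) - φ xs - (φ (x (j + 1)) - φ xs)) ≤
            M * (φ (x j) - φ xs) ^ r - M * (φ (x (j + 1)) - φ xs) ^ r := by
          have := mul_le_mul_of_nonneg_left hcc hM.le
          rw [hrθ] at this
          calc A * (φ (x j) - φ xs - (φ (x (j + 1)) - φ xs))
              = M * (r * (φ (x j) - φ xs) ^ (-θ) * (φ (x j) - φ xs - (φ (x (j + 1)) - φ xs))) := by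
                rw [hAdef, hκdef, ← hrdef]; ring
          _ ≤ M * ((φ (x j) - φ xs) ^ r - (φ (x (j + 1)) - φ xs) ^ r) := this
          _ = M * (φ (x j) - φ xs) ^ r - M * (φ (x (j + 1)) - φ xs) ^ r := by ring
        linarith
      -- tail length bound
    have hlen : ∀ k, N ≤ k → ‖x k - xs‖ ≤ (L₀ / β) * (M * (φ (x k) - φ xs) ^ r) := by
      intro k hk
      have htail : ∀ n, k ≤ n → ‖x k - x (n + 1)‖ ≤
          (L₀ / β) * (M * (φ (x k) - φ xs) ^ r - M * (φ (x (n + 1)) - φ xs) ^ r) := by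
        apply tail_bound x (fun j => M * (φ (x j) - φ xs) ^ r) (L₀ / β) (by positivity) k
        intro j hj
        exact hconv0 _ _ (hψ j (le_trans hk hj))
      have hlim : Tendsto (fun n => ‖x k - x (n + 1)‖) atTop (𝓝 ‖x k - xs‖) := by
        have h1 : Tendsto (fun n => x (n + 1)) atTop (𝓝 xs) :=
          hconv.comp (tendsto_add_atTop_nat 1)
        exact (h1.const_sub (x k)).norm
      apply le_of_tendsto hlim
      filter_upwards [eventually_ge_atTop k] with n hn
      calc ‖x k - x (n + 1)‖
          ≤ (L₀ / β) * (M * (φ (x k) - φ xs) ^ r - M * (φ (x (n + 1)) - φ xs) ^ r) := htail n hn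
      _ ≤ (L₀ / β) * (M * (φ (x k) - φ xs) ^ r) := by
            apply mul_le_mul_of_nonneg_left _ (by positivity)
            have : 0 ≤ M * (φ (x (n + 1)) - φ xs) ^ r := by
              have := hΔpos (n + 1); positivity
            linarith
    -- combine
    set B : ℝ := s * c / 2 with hBdef
    have hB : 0 < B := by rw [hBdef]; positivity
    set η₀ : ℝ := L₀ / β * M * B ^ (-1 / s * r) with hη₀def
    have hη₀ : 0 < η₀ := by
      rw [hη₀def]
      have := Real.rpow_pos_of_pos hB (-1 / s * r)
      positivity
    refine ⟨η₀, hη₀, 2 * N + 2, fun k hk => ?_⟩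
    have hkN : N ≤ k := by omega
    have hkpos : (0:ℝ) < (k : ℝ) := by
      have : (2:ℝ) ≤ (k:ℝ) := by exact_mod_cast (by omega : 2 ≤ k)
      linarith
    have hhalf : (k : ℝ) / 2 ≤ (k : ℝ) - N := by
      have h1 : ((2 * N + 2 : ℕ) : ℝ) ≤ (k : ℝ) := by exact_mod_cast hk
      push_cast at h1
      linarith
    have hΔk := hΔpos k
    have hratek := hrate k hkN
    have hNs : 0 < (φ (x N) - φ xs) ^ (-s) := Real.rpow_pos_of_pos (hΔpos N) _
    have hBk : B * (k : ℝ) ≤ (φ (x k) - φ xs) ^ (-s) := by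
      have : s * c * ((k:ℝ) - N) ≥ s * c * ((k:ℝ) / 2) :=
        mul_le_mul_of_nonneg_left hhalf (by positivity)
      rw [hBdef]
      calc s * c / 2 * (k:ℝ) = s * c * ((k:ℝ) / 2) := by ring
      _ ≤ s * c * ((k:ℝ) - N) := this
      _ ≤ (φ (x k) - φ xs) ^ (-s) := by linarith
    have hBkpos : 0 < B * (k : ℝ) := by positivity
    have hΔbound : φ (x k) - φ xs ≤ (B * (k : ℝ)) ^ (-1 / s) := by
      have e1 : φ (x k) - φ xs = ((φ (x k) - φ xs) ^ (-s)) ^ (-1 / s) := by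
        rw [← Real.rpow_mul hΔk.le]
        rw [show -s * (-1 / s) = 1 by field_simp]
        rw [Real.rpow_one]
      rw [e1]
      have hneg : -1 / s ≤ 0 := div_nonpos_of_nonpos_of_nonneg (by norm_num) hs.le
      exact Real.rpow_le_rpow_of_nonpos hBkpos hBk hneg
    have hΔr : (φ (x k) - φ xs) ^ r ≤ (B * (k:ℝ)) ^ (-1 / s * r) := by
      calc (φ (x k) - φ xs) ^ r ≤ ((B * (k:ℝ)) ^ (-1 / s)) ^ r :=
            Real.rpow_le_rpow hΔk.le hΔbound hr.le
      _ = (B * (k:ℝ)) ^ (-1 / s * r) := by rw [← Real.rpow_mul hBkpos.le]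
    have hsplit : (B * (k:ℝ)) ^ (-1 / s * r) = B ^ (-1 / s * r) * (k:ℝ) ^ (-1 / s * r) :=
      Real.mul_rpow hB.le hkpos.le
    have hexp : -1 / s * r = -((1 - θ) / (2 * θ - 1)) := by
      rw [hsdef, hrdef]; ring
    calc ‖x k - xs‖ ≤ (L₀ / β) * (M * (φ (x k) - φ xs) ^ r) := hlen k hkN
    _ ≤ (L₀ / β) * (M * (B ^ (-1 / s * r) * (k:ℝ) ^ (-1 / s * r))) := by
          apply mul_le_mul_of_nonneg_left _ (by positivity)
          apply mul_le_mul_of_nonneg_left _ hM.le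
          rw [← hsplit]
          exact hΔr
    _ = η₀ * (k:ℝ) ^ (-1 / s * r) := by rw [hη₀def]; ring
    _ = η₀ * (k:ℝ) ^ (-((1 - θ) / (2 * θ - 1))) := by rw [hexp]
  · -- degenerate case: the sequence is eventually constant equal to xs
    push_neg at hcase
    obtain ⟨K, hK⟩ := hcase
    have hKeq : ∀ j, K ≤ j → φ (x j) = φ xs := by
      intro j hj
      have := hanti hj
      have := hΔnn j
      have := hΔnn K
      linarith
    have hconst : ∀ j, K ≤ j → x j = x K := by
      intro j hj
      induction j with
      | zero => rw [Nat.le_zero.mp hj]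
      | succ n ih =>
        rcases Nat.lt_or_ge K (n + 1) with hlt | hge
        · have hn : K ≤ n := by omega
          have hd0 : y n - x n = 0 := by
            have h1 := hdec2 n
            have h2 : φ (x n) = φ xs := hKeq n hn
            have h3 : φ (x (n + 1)) = φ xs := hKeq (n + 1) hj
            have h4 : 0 ≤ α * lam n ^ 2 * ‖y n - x n‖ ^ 2 := by positivity
            have h5 : ρ * ‖y n - x n‖ ^ 2 ≤ ρ * 0 := by rw [mul_zero]; linarith
            have h6 : ‖y n - x n‖ ^ 2 ≤ 0 := (mul_le_mul_iff_right₀ hρ).mp h5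
            have h7 : ‖y n - x n‖ ^ 2 = 0 := le_antisymm h6 (sq_nonneg _)
            have h8 : ‖y n - x n‖ = 0 := by
              have := pow_eq_zero_iff (n := 2) (by norm_num) |>.mp h7
              exact this
            exact norm_eq_zero.mp h8
          have hyx : y n = x n := by
            have := sub_eq_zero.mp hd0; exact this
          rw [hnext n, hd0, hyx]
          simp [ih hn]
        · have : K = n + 1 := by omega
          rw [this]
    have hxK : x K = xs := by
      have hc2 : Tendsto x atTop (𝓝 (x K)) := by
        apply Tendsto.congr' _ (tendsto_const_nhds (x := x K))
        filter_upwards [eventually_ge_atTop K] with j hj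
        exact (hconst j hj).symm
      exact tendsto_nhds_unique hc2 hconv
    refine ⟨1, one_pos, K, fun k hk => ?_⟩
    rw [hconst k hk, hxK]
    simp only [sub_self, norm_zero, one_mul]
    positivity
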